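/- Let n ≥ 2 and suppose that there exist a strongly regular graph with parameters (4n−3, 2n−2, n−2, n−1) and a symmetric Hadamard matrix of order ζ, where ζ−α is even, 0 ≤ α ≤ ζ/2, and ζ−α > (√2+1)(2n−1)(4αn−4α+1). Then M_{ζ−α}(K_{2, ζ(n−1)+1}; 2) = 4n−2. -/

import Mathlib

/-!
Upper bound: in a symmetric 2-colouring of `K_{c×s}` without a monochromatic `K_{2,N}`, two
vertices have fewer than `N` common neighbours of either colour, so counting monochromatic
cherries gives `∑ᵥ (d₀(d₀ - 1) + d₁(d₁ - 1)) ≤ 2cs(cs - 1)(N - 1)`; convexity with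
`d₀ + d₁ = (c - 1)s` bounds the same sum from below, and for `c = 4n - 2`, `N = ζ(n - 1) + 1`
the two bounds clash as soon as `ζ - α > 2(2n - 1)(4α(n - 1) + 1)`.

Lower bound: colour the edge between `(p, x)` and `(q, y)` of `K_{(4n-3)×(ζ-α)}` by the sign of
`S p q * h x y`, where `S` is the Seidel matrix of the conference graph and `h` a principal
submatrix of the Hadamard matrix. Since `S` has zero row sums and `S² = (4n - 3)I - J`, while
distinct rows of `h` have inner product at most `α`, two vertices have at most `(n - 1)ζ` common
neighbours of either colour.
-/

open Finset Matrix

/-- The complete multipartite graph `K_{c×s}` with `c` partite sets, each of size `s`,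
on the vertex set `Fin c × Fin s`. -/
def multiK (c s : ℕ) : SimpleGraph (Fin c × Fin s) where
  Adj v w := v.1 ≠ w.1
  symm := ⟨fun _ _ h => Ne.symm h⟩
  loopless := ⟨fun _ h => h rfl⟩

/-- The symmetric edge `k`-coloring `C` of the graph `G` contains a monochromatic copy of the
complete bipartite graph `K_{2,n}` in color `i`: there are two distinct vertices `a b` and a
set `S` of `n` further vertices all joined to both `a` and `b` by edges of color `i`. -/
def HasMonoK2 {V : Type*} (G : SimpleGraph V) {k : ℕ}
    (C : V → V → Fin k) (i : Fin k) (n : ℕ) : Prop :=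
  ∃ (a b : V) (S : Finset V), a ≠ b ∧ a ∉ S ∧ b ∉ S ∧ S.card = n ∧
    ∀ v ∈ S, G.Adj a v ∧ G.Adj b v ∧ C a v = i ∧ C b v = i

/-- Every symmetric `k`-coloring of the edges of `K_{c×s}` contains a monochromatic copy of
`K_{2, ns i}` in some color `i`. -/
def ArrowsVec (c s k : ℕ) (ns : Fin k → ℕ) : Prop :=
  ∀ C : (Fin c × Fin s) → (Fin c × Fin s) → Fin k,
    (∀ v w, C v w = C w v) → ∃ i : Fin k, HasMonoK2 (multiK c s) C i (ns i)

/-- Every symmetric `k`-coloring of the edges of `K_{c×s}` contains a monochromatic `K_{2,n}`. -/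
def Arrows (c s n k : ℕ) : Prop := ArrowsVec c s k (fun _ => n)

/-- The set multipartite Ramsey number `M_s(K_{2,n}; k)`: the smallest positive integer `c` such
that every `k`-coloring of the edges of `K_{c×s}` contains a monochromatic `K_{2,n}`. -/
noncomputable def setRamsey (s n k : ℕ) : ℕ := sInf {c : ℕ | 0 < c ∧ Arrows c s n k}

/-- The size multipartite Ramsey number `m_c(K_{2,n}; k)`: the smallest positive integer `s` such
that every `k`-coloring of the edges of `K_{c×s}` contains a monochromatic `K_{2,n}`. -/
noncomputable def sizeRamsey (c n k : ℕ) : ℕ := sInf {s : ℕ | 0 < s ∧ Arrows c s n k}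

/-- The size multipartite Ramsey number `m_c(K_{2,n₁},…,K_{2,n_k})`. -/
noncomputable def sizeRamseyVec (c k : ℕ) (ns : Fin k → ℕ) : ℕ :=
  sInf {s : ℕ | 0 < s ∧ ArrowsVec c s k ns}

/-- All entries of the matrix `H` are `1` or `-1`. -/
def PMOne {ι : Type*} (H : Matrix ι ι ℤ) : Prop := ∀ i j, H i j = 1 ∨ H i j = -1

/-- `H` is an `[α]`-Hadamard matrix: a square `±1` matrix such that `α` is an upper bound for
`|(H * Hᵀ) i j|` over all pairs `i ≠ j`. -/
def IsBHadamard {ι : Type*} [Fintype ι] (α : ℕ) (H : Matrix ι ι ℤ) : Prop :=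
  PMOne H ∧ ∀ i j, i ≠ j → |(H * Hᵀ) i j| ≤ (α : ℤ)

/-- `H` is an `α`-Hadamard matrix: a square `±1` matrix such that `α` is the maximum of
`|(H * Hᵀ) i j|` over all pairs `i ≠ j`. -/
def IsEHadamard {ι : Type*} [Fintype ι] (α : ℕ) (H : Matrix ι ι ℤ) : Prop :=
  IsBHadamard α H ∧ ∃ i j, i ≠ j ∧ |(H * Hᵀ) i j| = (α : ℤ)

/-- `H` is a Hadamard matrix: a square `±1` matrix with `H * Hᵀ = ζ • 1`. -/
def IsHadamard {ι : Type*} [Fintype ι] [DecidableEq ι] (H : Matrix ι ι ℤ) : Prop :=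
  PMOne H ∧ H * Hᵀ = (Fintype.card ι : ℤ) • (1 : Matrix ι ι ℤ)


open SimpleGraph

theorem SimpleGraph.sum_degree_mul_degree_sub_one {V : Type*} [Fintype V] [DecidableEq V]
    (G : SimpleGraph V) [DecidableRel G.Adj] :
    ∑ v, G.degree v * (G.degree v - 1) =
      ∑ p ∈ (univ : Finset V).offDiag, Fintype.card (G.commonNeighbors p.1 p.2) := by
  have hdeg : ∀ v, G.degree v * (G.degree v - 1) =
      #((univ : Finset V).offDiag.filter fun p => G.Adj v p.1 ∧ G.Adj v p.2) := by
    intro v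
    rw [← G.card_neighborFinset_eq_degree, Nat.mul_sub_one, ← offDiag_card]
    congr 1
    ext p
    simp only [mem_offDiag, mem_neighborFinset, mem_filter, mem_univ, true_and]
    tauto
  have hcommon : ∀ p : V × V, Fintype.card (G.commonNeighbors p.1 p.2) =
      #(univ.filter fun v => G.Adj v p.1 ∧ G.Adj v p.2) := by
    intro p
    rw [← Set.toFinset_card]
    congr 1
    ext v
    simp only [Set.mem_toFinset, mem_commonNeighbors, mem_filter, mem_univ, true_and,
      G.adj_comm p.1, G.adj_comm p.2]
  simp_rw [hdeg, hcommon, card_filter]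
  exact sum_comm

section ColorClass

variable {V : Type*} (G : SimpleGraph V) {k : ℕ} (C : V → V → Fin k)

def colorClass (i : Fin k) : SimpleGraph V where
  Adj v w := G.Adj v w ∧ C v w = i ∧ C w v = i
  symm := ⟨fun _ _ h => ⟨h.1.symm, h.2.2, h.2.1⟩⟩
  loopless := ⟨fun _ h => G.loopless.irrefl _ h.1⟩

instance [DecidableRel G.Adj] (i : Fin k) : DecidableRel (colorClass G C i).Adj :=
  fun _ _ => inferInstanceAs (Decidable (_ ∧ _ ∧ _))

variable {G C}

@[simp]
theorem colorClass_adj {i : Fin k} {v w : V} :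
    (colorClass G C i).Adj v w ↔ G.Adj v w ∧ C v w = i ∧ C w v = i :=
  Iff.rfl

theorem hasMonoK2_of_le_card_commonNeighbors [Fintype V] [DecidableRel G.Adj]
    {i : Fin k} {N : ℕ} {a b : V} (hab : a ≠ b)
    (hN : N ≤ Fintype.card ((colorClass G C i).commonNeighbors a b)) :
    HasMonoK2 G C i N := by
  classical
  rw [← Set.toFinset_card] at hN
  obtain ⟨S, hS, rfl⟩ := exists_subset_card_eq hN
  have hmem : ∀ v ∈ S, (colorClass G C i).Adj a v ∧ (colorClass G C i).Adj b v := fun v hv =>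
    (mem_commonNeighbors _).1 (Set.mem_toFinset.1 (hS hv))
  refine ⟨a, b, S, hab, fun ha => (hmem a ha).1.1.ne rfl, fun hb => (hmem b hb).2.1.ne rfl, rfl,
    fun v hv => ?_⟩
  obtain ⟨⟨hav, hai, -⟩, ⟨hbv, hbi, -⟩⟩ := hmem v hv
  exact ⟨hav, hbv, hai, hbi⟩

theorem degree_colorClass_zero_add_degree_colorClass_one [Fintype V] [DecidableRel G.Adj]
    {C : V → V → Fin 2} (hC : ∀ v w, C v w = C w v) (v : V) :
    (colorClass G C 0).degree v + (colorClass G C 1).degree v = G.degree v := by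
  classical
  simp only [← card_neighborFinset_eq_degree]
  rw [← card_filter_add_card_filter_not (s := G.neighborFinset v) (p := fun w => C v w = 0)]
  congr 2 <;> ext w <;> simp only [mem_neighborFinset, colorClass_adj, mem_filter, hC w v]
  · tauto
  · have : C v w = 1 ↔ C v w ≠ 0 := by omega
    tauto

end ColorClass

theorem SimpleGraph.IsRegularOfDegree.mul_sub_two_le_of_forall_not_hasMonoK2 {V : Type*}
    [Fintype V] [DecidableEq V] [Nonempty V] {G : SimpleGraph V} [DecidableRel G.Adj] {D N : ℕ}
    (hG : G.IsRegularOfDegree D) {C : V → V → Fin 2} (hC : ∀ v w, C v w = C w v)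
    (hno : ∀ i, ¬HasMonoK2 G C i N) :
    (D : ℤ) * (D - 2) ≤ 4 * (Fintype.card V - 1) * (N - 1) := by
  set n := Fintype.card V
  set d : Fin 2 → V → ℤ := fun i v => (colorClass G C i).degree v
  have hcherries : ∀ i, ∑ v, d i v * (d i v - 1) ≤ n * (n - 1) * (N - 1) := by
    intro i
    have hcast : ∀ m : ℕ, ((m * (m - 1) : ℕ) : ℤ) = m * (m - 1) := by
      rintro (_ | m) <;> simp
    have hcommon : ∀ p ∈ (univ : Finset V).offDiag,
        (Fintype.card ((colorClass G C i).commonNeighbors p.1 p.2) : ℤ) ≤ N - 1 := by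
      intro p hp
      have := mt (hasMonoK2_of_le_card_commonNeighbors (mem_offDiag.1 hp).2.2) (hno i)
      omega
    calc ∑ v, d i v * (d i v - 1)
        = ∑ p ∈ (univ : Finset V).offDiag,
            (Fintype.card ((colorClass G C i).commonNeighbors p.1 p.2) : ℤ) := by
          simp_rw [d, ← hcast, ← Nat.cast_sum, sum_degree_mul_degree_sub_one]
      _ ≤ #(univ : Finset V).offDiag * ((N : ℤ) - 1) := by
          rw [← nsmul_eq_mul, ← sum_const]
          exact sum_le_sum hcommon
      _ = n * (n - 1) * (N - 1) := by
          rw [offDiag_card, card_univ, Nat.cast_sub (Nat.le_mul_self n)]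
          push_cast
          ring
  have hconvex : ∀ v,
      (D : ℤ) * (D - 2) ≤ 2 * (d 0 v * (d 0 v - 1) + d 1 v * (d 1 v - 1)) := by
    intro v
    have hsplit : d 0 v + d 1 v = D := by
      simp only [d]
      exact_mod_cast (degree_colorClass_zero_add_degree_colorClass_one hC v).trans (hG v)
    nlinarith [sq_nonneg (d 0 v - d 1 v)]
  have hn : (0 : ℤ) < n := by exact_mod_cast Fintype.card_pos
  have htotal := sum_le_sum fun v (_ : v ∈ univ) => hconvex v
  rw [sum_const, card_univ, nsmul_eq_mul, ← mul_sum, sum_add_distrib] at htotal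
  nlinarith [hcherries 0, hcherries 1]

instance (c s : ℕ) : DecidableRel (multiK c s).Adj :=
  fun v w => inferInstanceAs (Decidable (v.1 ≠ w.1))

theorem multiK_eq_completeEquipartiteGraph (c s : ℕ) :
    multiK c s = completeEquipartiteGraph c s := by
  ext; rfl

theorem multiK_isRegularOfDegree (c s : ℕ) : (multiK c s).IsRegularOfDegree ((c - 1) * s) := by
  intro v
  convert degree_completeEquipartiteGraph v using 2
  exact multiK_eq_completeEquipartiteGraph c s

theorem arrows_two_of_lt {c s N : ℕ} (hc : 0 < c) (hs : 0 < s)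
    (h : 4 * ((c : ℤ) * s - 1) * (N - 1) < ((c - 1) * s) * ((c - 1) * s - 2)) :
    Arrows c s N 2 := by
  intro C hC
  by_contra! hno
  have : Nonempty (Fin c × Fin s) := ⟨(⟨0, hc⟩, ⟨0, hs⟩)⟩
  have := (multiK_isRegularOfDegree c s).mul_sub_two_le_of_forall_not_hasMonoK2 hC hno
  push_cast [Nat.cast_sub hc, Fintype.card_prod, Fintype.card_fin] at this
  linarith

def multiK.castLE {c₁ c₂ : ℕ} (h : c₁ ≤ c₂) (s : ℕ) :
    multiK c₁ s ↪g multiK c₂ s where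
  toFun p := (Fin.castLE h p.1, p.2)
  inj' _ _ hpq := Prod.ext (Fin.castLE_injective h (Prod.ext_iff.1 hpq).1) (Prod.ext_iff.1 hpq).2
  map_rel_iff' := (Fin.castLE_injective h).ne_iff

theorem HasMonoK2.of_embedding {V W : Type*} {G : SimpleGraph V} {G' : SimpleGraph W}
    (f : G ↪g G') {k : ℕ} {C : W → W → Fin k} {i : Fin k} {N : ℕ}
    (h : HasMonoK2 G (fun v w => C (f v) (f w)) i N) : HasMonoK2 G' C i N := by
  obtain ⟨a, b, S, hab, haS, hbS, rfl, hS⟩ := h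
  refine ⟨f a, f b, S.map f.toEmbedding, f.injective.ne hab, ?_, ?_, card_map _, ?_⟩
  · simpa using haS
  · simpa using hbS
  · simp only [mem_map, forall_exists_index, and_imp]
    rintro _ v hv rfl
    obtain ⟨hav, hbv, hai, hbi⟩ := hS v hv
    exact ⟨f.map_rel_iff.2 hav, f.map_rel_iff.2 hbv, hai, hbi⟩

theorem ArrowsVec.mono {c₁ c₂ s k : ℕ} {ns : Fin k → ℕ} (h : c₁ ≤ c₂)
    (hA : ArrowsVec c₁ s k ns) : ArrowsVec c₂ s k ns := fun _ hC =>
  let ⟨i, hi⟩ := hA _ fun _ _ => hC _ _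
  ⟨i, hi.of_embedding (multiK.castLE h s)⟩

theorem setRamsey_eq_succ {c s N k : ℕ} (hup : Arrows (c + 1) s N k) (hlow : ¬Arrows c s N k) :
    setRamsey s N k = c + 1 := by
  refine (Nat.sInf_upward_closed_eq_succ_iff ?_ c).2 ⟨⟨c.succ_pos, hup⟩, fun h => hlow h.2⟩
  exact fun c₁ c₂ hc ⟨hc₁, hA⟩ => ⟨hc₁.trans_le hc, ArrowsVec.mono hc hA⟩

/-- The Seidel matrix of a conference graph on `ι`; equivalently, bordering `Q` by a zero corner
and a row and a column of ones gives a symmetric conference matrix. -/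
structure IsConferenceSeidel {ι : Type*} [Fintype ι] [DecidableEq ι] (Q : Matrix ι ι ℤ) :
    Prop where
  isSymm : Q.IsSymm
  apply_self : ∀ u, Q u u = 0
  apply_of_ne : ∀ u v, u ≠ v → Q u v = 1 ∨ Q u v = -1
  sum_apply : ∀ u, ∑ v, Q u v = 0
  mul_self : Q * Q = (Fintype.card ι : ℤ) • 1 - of fun _ _ => 1

theorem IsConferenceSeidel.submatrix {ι κ : Type*} [Fintype ι] [DecidableEq ι] [Fintype κ]
    [DecidableEq κ] {Q : Matrix ι ι ℤ} (hQ : IsConferenceSeidel Q) (e : κ ≃ ι) :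
    IsConferenceSeidel (Q.submatrix e e) where
  isSymm := hQ.isSymm.submatrix e
  apply_self u := hQ.apply_self (e u)
  apply_of_ne u v huv := hQ.apply_of_ne (e u) (e v) (e.injective.ne huv)
  sum_apply u := (e.sum_comp (Q (e u))).trans (hQ.sum_apply (e u))
  mul_self := by
    rw [submatrix_mul_equiv, hQ.mul_self, Fintype.card_congr e]
    ext u v
    simp only [submatrix_apply, Matrix.sub_apply, Matrix.smul_apply, one_apply, of_apply,
      e.injective.eq_iff]

def seidelMatrix {V : Type*} [DecidableEq V] (G : SimpleGraph V) [DecidableRel G.Adj] :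
    Matrix V V ℤ :=
  Gᶜ.adjMatrix ℤ - G.adjMatrix ℤ

theorem SimpleGraph.IsSRGWith.isConferenceSeidel_seidelMatrix {V : Type*} [Fintype V]
    [DecidableEq V] {G : SimpleGraph V} [DecidableRel G.Adj] {t : ℕ}
    (hG : G.IsSRGWith (4 * t + 1) (2 * t) (t - 1) t) (ht : 0 < t) :
    IsConferenceSeidel (seidelMatrix G) where
  isSymm := Gᶜ.isSymm_adjMatrix.sub G.isSymm_adjMatrix
  apply_self u := by simp [seidelMatrix]
  apply_of_ne u v huv := by by_cases h : G.Adj u v <;> simp [seidelMatrix, h, huv]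
  sum_apply u := by
    have hA := adjMatrix_mulVec_const_apply_of_regular (α := ℤ) (a := 1) hG.regular (v := u)
    have hB :=
      adjMatrix_mulVec_const_apply_of_regular (α := ℤ) (a := 1) hG.regular.compl (v := u)
    simp only [mulVec, dotProduct, Function.const_apply, mul_one] at hA hB
    simp only [seidelMatrix, Matrix.sub_apply, sum_sub_distrib, hA, hB, hG.card]
    omega
  mul_self := by
    rw [seidelMatrix, hG.card]
    set A := G.adjMatrix ℤ
    set J : Matrix V V ℤ := of fun _ _ => 1
    have hcompl : Gᶜ.adjMatrix ℤ = J - 1 - A := by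
      ext u v
      by_cases h : G.Adj u v <;> by_cases huv : u = v <;> simp [A, J, h, huv, one_apply]
    have hAA : A * A = (2 * t : ℤ) • 1 + ((t : ℤ) - 1) • A + (t : ℤ) • (J - 1 - A) := by
      rw [← pow_two, hG.matrix_eq, hcompl]
      simp only [← Nat.cast_smul_eq_nsmul ℤ, Nat.cast_mul, Nat.cast_ofNat, Nat.cast_pred ht]
      rfl
    have hAJ : A * J = (2 * t : ℤ) • J := by
      ext u v
      simp [A, J, adjMatrix_mul_apply, hG.regular u]
    have hJA : J * A = (2 * t : ℤ) • J := by
      ext u v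
      simp [A, J, mul_adjMatrix_apply, hG.regular v]
    have hJJ : J * J = (Fintype.card V : ℤ) • J := by
      ext u v
      simp [J, mul_apply]
    rw [hcompl]
    simp only [sub_mul, mul_sub, one_mul, mul_one, hAA, hAJ, hJA, hJJ, hG.card]
    push_cast
    module

theorem PMOne.abs_apply {ι : Type*} {H : Matrix ι ι ℤ} (hH : PMOne H) (i j : ι) :
    |H i j| = 1 := by
  rcases hH i j with h | h <;> simp [h]

theorem PMOne.abs_sum_add_le {ι : Type*} [Fintype ι] {H : Matrix ι ι ℤ} (hH : PMOne H)
    (x y : ι) : |∑ z, (H x z + H y z)| ≤ Fintype.card ι + (H * Hᵀ) x y := by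
  calc |∑ z, (H x z + H y z)| ≤ ∑ z, |H x z + H y z| := abs_sum_le_sum_abs _ _
    _ = ∑ z, (1 + H x z * H y z) := by
        refine sum_congr rfl fun z _ => ?_
        rcases hH x z with h₁ | h₁ <;> rcases hH y z with h₂ | h₂ <;> simp [h₁, h₂]
    _ = Fintype.card ι + (H * Hᵀ) x y := by simp [sum_add_distrib, mul_apply]

theorem IsHadamard.isBHadamard_submatrix {ι κ : Type*} [Fintype ι] [DecidableEq ι] [Fintype κ]
    {H : Matrix ι ι ℤ} (hH : _root_.IsHadamard H) (f : κ ↪ ι) :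
    IsBHadamard (Fintype.card ι - Fintype.card κ) (H.submatrix f f) := by
  classical
  refine ⟨fun _ _ => hH.1 _ _, fun x y hxy => ?_⟩
  set g : ι → ℤ := fun k => H (f x) k * H (f y) k
  have hrows : ∑ k, g k = 0 := by
    simpa [mul_apply, one_apply, f.injective.ne hxy] using congrFun (congrFun hH.2 (f x)) (f y)
  have hsub : (H.submatrix f f * (H.submatrix f f)ᵀ) x y = ∑ k ∈ univ.map f, g k := by
    simp [g, mul_apply]
  have hrest : |∑ k ∈ (univ.map f)ᶜ, g k| ≤ Fintype.card ι - Fintype.card κ := by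
    calc |∑ k ∈ (univ.map f)ᶜ, g k|
        ≤ ∑ k ∈ (univ.map f)ᶜ, |g k| := abs_sum_le_sum_abs _ _
      _ = #(univ.map f)ᶜ := by simp [g, abs_mul, hH.1.abs_apply]
      _ = Fintype.card ι - Fintype.card κ := by
        rw [card_compl, card_map, card_univ, Nat.cast_sub (Fintype.card_le_of_embedding f)]
  rw [← sum_add_sum_compl (univ.map f), ← hsub] at hrows
  rw [Nat.cast_sub (Fintype.card_le_of_embedding f)]
  rw [abs_le] at hrest ⊢
  constructor <;> linarith [hrest.1, hrest.2]

section ConferenceSeidel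

variable {ι : Type*} [Fintype ι] [DecidableEq ι] {Q : Matrix ι ι ℤ}

theorem sum_compl_pair_of_eq_zero {f : ι → ℤ} {u : ι} (hu : f u = 0) (v : ι) :
    ∑ w ∈ ({u, v} : Finset ι)ᶜ, f w = ∑ w, f w - f v := by
  rw [← sum_add_sum_compl {u, v} f, sum_insert_zero hu, sum_singleton]
  ring

theorem IsConferenceSeidel.sum_compl_pair_apply (hQ : IsConferenceSeidel Q) (u v : ι) :
    ∑ w ∈ ({u, v} : Finset ι)ᶜ, Q u w = -Q u v := by
  rw [sum_compl_pair_of_eq_zero (hQ.apply_self u), hQ.sum_apply, zero_sub]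

theorem IsConferenceSeidel.sum_compl_pair_mul_apply (hQ : IsConferenceSeidel Q) (u v : ι) :
    ∑ w ∈ ({u, v} : Finset ι)ᶜ, Q u w * Q v w = (Q * Q) u v := by
  rw [sum_compl_pair_of_eq_zero (by simp [hQ.apply_self u]), hQ.apply_self v, mul_zero, sub_zero,
    mul_apply]
  simp_rw [hQ.isSymm.apply v]

theorem IsConferenceSeidel.mul_self_apply_self (hQ : IsConferenceSeidel Q) (u : ι) :
    (Q * Q) u u = Fintype.card ι - 1 := by
  simp only [hQ.mul_self, Matrix.sub_apply, Matrix.smul_apply, one_apply_eq, of_apply, smul_eq_mul,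
    mul_one]

theorem IsConferenceSeidel.mul_self_apply_of_ne (hQ : IsConferenceSeidel Q) {u v : ι}
    (huv : u ≠ v) : (Q * Q) u v = -1 := by
  simp only [hQ.mul_self, Matrix.sub_apply, Matrix.smul_apply, one_apply_ne huv, of_apply,
    smul_zero, zero_sub]

end ConferenceSeidel

section SignColoring

variable {c s : ℕ} {Q : Matrix (Fin c) (Fin c) ℤ} {h : Matrix (Fin s) (Fin s) ℤ}

def signColoring (Q : Matrix (Fin c) (Fin c) ℤ) (h : Matrix (Fin s) (Fin s) ℤ)
    (p q : Fin c × Fin s) : Fin 2 :=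
  if Q p.1 q.1 * h p.2 q.2 = 1 then 0 else 1

-- With `η = (-1) ^ i`, `(1 + η ξ) / 2` indicates that the sign `ξ` is given colour `i`.
theorem four_mul_ite_and_eq {ξ ξ' : ℤ} (hξ : ξ = 1 ∨ ξ = -1) (hξ' : ξ' = 1 ∨ ξ' = -1)
    (i : Fin 2) :
    4 * (if (if ξ = 1 then (0 : Fin 2) else 1) = i ∧ (if ξ' = 1 then (0 : Fin 2) else 1) = i
      then (1 : ℤ) else 0) = (1 + (-1) ^ (i : ℕ) * ξ) * (1 + (-1) ^ (i : ℕ) * ξ') := by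
  rcases hξ with rfl | rfl <;> rcases hξ' with rfl | rfl <;> fin_cases i <;> simp

theorem four_mul_card_common_signColoring (hQ : IsConferenceSeidel Q) (hh : PMOne h)
    (a b : Fin c × Fin s) (i : Fin 2) :
    4 * (#((({a.1, b.1}ᶜ : Finset (Fin c)) ×ˢ univ).filter
        fun p => signColoring Q h a p = i ∧ signColoring Q h b p = i) : ℤ) =
      #({a.1, b.1}ᶜ : Finset (Fin c)) * s
        - (-1) ^ (i : ℕ) * Q a.1 b.1 * ∑ z, (h a.2 z + h b.2 z)
        + (Q * Q) a.1 b.1 * (h * hᵀ) a.2 b.2 := by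
  set η : ℤ := (-1) ^ (i : ℕ)
  have hη : η * η = 1 := by rw [← pow_add, ← two_mul, pow_mul]; simp
  have hpm : ∀ u w, u ≠ w → ∀ z x, Q u w * h x z = 1 ∨ Q u w * h x z = -1 := by
    intro u w huw z x
    rcases hQ.apply_of_ne u w huw with h₁ | h₁ <;> rcases hh x z with h₂ | h₂ <;>
      simp [h₁, h₂]
  have hinner : ∀ w, ∑ z, (1 + η * (Q a.1 w * h a.2 z)) * (1 + η * (Q b.1 w * h b.2 z)) =
      s + η * Q a.1 w * ∑ z, h a.2 z + η * Q b.1 w * ∑ z, h b.2 z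
        + Q a.1 w * Q b.1 w * (h * hᵀ) a.2 b.2 := by
    intro w
    have hexpand : ∀ z, (1 + η * (Q a.1 w * h a.2 z)) * (1 + η * (Q b.1 w * h b.2 z)) =
        1 + η * Q a.1 w * h a.2 z + η * Q b.1 w * h b.2 z
          + η * η * (Q a.1 w * Q b.1 w) * (h a.2 z * h b.2 z) := fun z => by ring
    simp only [hexpand, hη, one_mul, sum_add_distrib, ← mul_sum, mul_apply, transpose_apply]
    simp
  rw [card_filter, sum_product, Nat.cast_sum, mul_sum]
  calc ∑ w ∈ {a.1, b.1}ᶜ, 4 * ((∑ z, if signColoring Q h a (w, z) = i ∧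
          signColoring Q h b (w, z) = i then 1 else 0 : ℕ) : ℤ)
      = ∑ w ∈ {a.1, b.1}ᶜ, ∑ z,
          (1 + η * (Q a.1 w * h a.2 z)) * (1 + η * (Q b.1 w * h b.2 z)) := by
        refine sum_congr rfl fun w hw => ?_
        have ha : a.1 ≠ w := fun e => by simp [← e] at hw
        have hb : b.1 ≠ w := fun e => by simp [← e] at hw
        push_cast
        rw [mul_sum]
        exact sum_congr rfl fun z _ =>
          four_mul_ite_and_eq (hpm _ _ ha z a.2) (hpm _ _ hb z b.2) i
    _ = _ := by
        simp only [hinner, sum_add_distrib, ← sum_mul, sum_const, nsmul_eq_mul,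
          hQ.sum_compl_pair_mul_apply, ← mul_sum, hQ.sum_compl_pair_apply]
        rw [pair_comm, hQ.sum_compl_pair_apply, hQ.isSymm.apply, pair_comm]
        ring

theorem four_mul_card_common_signColoring_le {β : ℕ} (hQ : IsConferenceSeidel Q)
    (hh : IsBHadamard β h) {a b : Fin c × Fin s} (hab : a ≠ b) (i : Fin 2) :
    4 * (#((({a.1, b.1}ᶜ : Finset (Fin c)) ×ˢ univ).filter
        fun p => signColoring Q h a p = i ∧ signColoring Q h b p = i) : ℤ) ≤
      (c - 1) * (s + β) := by
  rw [four_mul_card_common_signColoring hQ hh.1 a b i]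
  have hc : 1 ≤ c := a.1.pos
  have hsum := hh.1.abs_sum_add_le a.2 b.2
  rw [Fintype.card_fin] at hsum
  by_cases hab₁ : a.1 = b.1
  · have hβ := (abs_le.1 (hh.2 a.2 b.2 fun e => hab (Prod.ext hab₁ e))).2
    rw [hab₁, pair_eq_singleton, card_compl, card_singleton, hQ.apply_self,
      hQ.mul_self_apply_self, Fintype.card_fin, Nat.cast_sub hc]
    push_cast
    nlinarith
  · have hsign : -((-1) ^ (i : ℕ) * Q a.1 b.1 * ∑ z, (h a.2 z + h b.2 z)) ≤
        |∑ z, (h a.2 z + h b.2 z)| := by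
      refine (neg_le_abs _).trans_eq ?_
      rcases hQ.apply_of_ne _ _ hab₁ with h₁ | h₁ <;> simp [h₁, abs_mul]
    rw [card_compl, card_pair hab₁, hQ.mul_self_apply_of_ne hab₁, Fintype.card_fin,
      Nat.cast_sub (by omega : 2 ≤ c)]
    push_cast
    nlinarith

theorem not_arrows_signColoring {β N : ℕ} (hQ : IsConferenceSeidel Q) (hh : IsBHadamard β h)
    (hsymm : h.IsSymm) (hN : (c - 1) * (s + β) < 4 * N) : ¬Arrows c s N 2 := by
  intro hA
  obtain ⟨i, a, b, S, hab, -, -, hcard, hS⟩ := hA (signColoring Q h) fun p q => by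
    rw [signColoring, signColoring, hQ.isSymm.apply, hsymm.apply]
  have hsub : S ⊆ (({a.1, b.1}ᶜ : Finset (Fin c)) ×ˢ univ).filter
      fun p => signColoring Q h a p = i ∧ signColoring Q h b p = i := by
    intro p hp
    obtain ⟨hap, hbp, hai, hbi⟩ := hS p hp
    simp only [mem_filter, mem_product, mem_compl, mem_insert, mem_singleton, mem_univ]
    exact ⟨⟨fun e => e.elim (hap ∘ Eq.symm) (hbp ∘ Eq.symm), trivial⟩, hai, hbi⟩
  have hc : 1 ≤ c := a.1.pos
  have hT := card_le_card hsub
  rw [hcard] at hT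
  have hN' : ((c - 1 : ℕ) * (s + β) : ℤ) < 4 * N := by exact_mod_cast hN
  push_cast [Nat.cast_sub hc] at hN'
  have := four_mul_card_common_signColoring_le hQ hh hab i
  have : (N : ℤ) ≤ _ := Nat.cast_le.2 hT
  linarith

end SignColoring

theorem arrows_of_two_mul_lt {t s α : ℕ} (hs : 2 * ((2 * t + 1) * (4 * α * t + 1)) < s) :
    Arrows (4 * t + 2) s ((s + α) * t + 1) 2 := by
  refine arrows_two_of_lt (by omega) (by omega) ?_
  have hs' : (2 * ((2 * t + 1) * (4 * α * t + 1)) : ℤ) < s := by exact_mod_cast hs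
  have hgap : (0 : ℤ) < s * (s - 2 * ((2 * t + 1) * (4 * α * t + 1))) :=
    mul_pos (by omega) (by omega)
  push_cast
  nlinarith [Nat.zero_le (t * α)]

theorem not_arrows_of_isSRGWith_of_isHadamard {V : Type*} [Fintype V] [DecidableEq V]
    {G : SimpleGraph V} [DecidableRel G.Adj] {t s α : ℕ}
    (hG : G.IsSRGWith (4 * t + 1) (2 * t) (t - 1) t) (ht : 0 < t)
    {H : Matrix (Fin (s + α)) (Fin (s + α)) ℤ} (hH : _root_.IsHadamard H) (hsymm : H.IsSymm) :
    ¬Arrows (4 * t + 1) s ((s + α) * t + 1) 2 := by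
  have hQ := (hG.isConferenceSeidel_seidelMatrix ht).submatrix
    (Fintype.equivFinOfCardEq hG.card).symm
  have hh := hH.isBHadamard_submatrix (Fin.castLEEmb (Nat.le_add_right s α))
  rw [Fintype.card_fin, Fintype.card_fin, Nat.add_sub_cancel_left] at hh
  refine not_arrows_signColoring hQ hh (hsymm.submatrix _) ?_
  rw [Nat.add_sub_cancel]
  nlinarith

theorem statement18_general (n ζ α : ℕ) (hn : 2 ≤ n)
    (hSRG : ∃ (V : Type) (_ : Fintype V) (G : SimpleGraph V) (_ : DecidableRel G.Adj),
      G.IsSRGWith (4 * n - 3) (2 * n - 2) (n - 2) (n - 1))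
    (hHad : ∃ H : Matrix (Fin ζ) (Fin ζ) ℤ, H.IsSymm ∧ _root_.IsHadamard H)
    (hbig : ((ζ - α : ℕ) : ℝ) >
      (Real.sqrt 2 + 1) * (2 * (n : ℝ) - 1) * (4 * (α : ℝ) * n - 4 * α + 1)) :
    setRamsey (ζ - α) (ζ * (n - 1) + 1) 2 = 4 * n - 2 := by
  classical
  obtain ⟨t, rfl⟩ : ∃ t, n = t + 1 := ⟨n - 1, by omega⟩
  obtain ⟨V, _, G, _, hG⟩ := hSRG
  obtain ⟨H, hsymm, hH⟩ := hHad
  have hgap : (2 * ((2 * t + 1) * (4 * α * t + 1)) : ℝ) < (ζ - α : ℕ) := by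
    have : (1 : ℝ) < √2 := Real.one_lt_sqrt_two
    push_cast at hbig
    nlinarith [Nat.zero_le (α * t)]
  have hαζ : α < ζ :=
    Nat.lt_of_sub_pos (by exact_mod_cast (by positivity : (0 : ℝ) < _).trans hgap)
  obtain ⟨s, rfl⟩ : ∃ s, ζ = s + α := ⟨ζ - α, by omega⟩
  rw [Nat.add_sub_cancel] at hgap ⊢
  rw [show 4 * (t + 1) - 3 = 4 * t + 1 by omega, show 2 * (t + 1) - 2 = 2 * t by omega,
    show t + 1 - 2 = t - 1 by omega, Nat.add_sub_cancel] at hG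
  rw [show 4 * (t + 1) - 2 = 4 * t + 1 + 1 by omega, Nat.add_sub_cancel]
  exact setRamsey_eq_succ (arrows_of_two_mul_lt (by exact_mod_cast hgap))
    (not_arrows_of_isSRGWith_of_isHadamard hG (by omega) hH hsymm)

/-- **Example (exact set multipartite Ramsey number from a deleted Hadamard matrix).**
Let `n ≥ 2`. Suppose there exist a strongly regular graph with parameters
`(4n-3, 2n-2, n-2, n-1)` and a symmetric Hadamard matrix of order `ζ`, where `ζ - α` is even,
`0 ≤ α ≤ ζ/2`, and `ζ - α > (√2+1)(2n-1)(4αn-4α+1)`. Then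
`M_{ζ-α}(K_{2, ζ(n-1)+1}; 2) = 4n-2`. -/
theorem statement18 (n ζ α : ℕ) (hn : 2 ≤ n)
    (hSRG : ∃ (V : Type) (_ : Fintype V) (G : SimpleGraph V) (_ : DecidableRel G.Adj),
      G.IsSRGWith (4 * n - 3) (2 * n - 2) (n - 2) (n - 1))
    (hHad : ∃ H : Matrix (Fin ζ) (Fin ζ) ℤ, H.IsSymm ∧ _root_.IsHadamard H)
    (heven : Even (ζ - α)) (hαζ : (α : ℚ) ≤ (ζ : ℚ) / 2)
    (hbig : ((ζ - α : ℕ) : ℝ) >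
      (Real.sqrt 2 + 1) * (2 * (n : ℝ) - 1) * (4 * (α : ℝ) * n - 4 * α + 1)) :
    setRamsey (ζ - α) (ζ * (n - 1) + 1) 2 = 4 * n - 2 :=
  statement18_general n ζ α hn hSRG hHad hbig
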